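/- Off-diagonal heat kernel bound implies a maximal function bound for the global part of the vertical square function: Suppose K_t(x,y) satisfies |t ∂_t K_t(x,y)| ≤ C_N t^{−n/2} e^{−c|x−y|²/t} (1 + √t/ρ(x))^{−N} for all N > 0 (constants depending on N). Then for γ > 0, choosing A > n + γ and N > A − n, there is a constant C such that for all f ∈ C_c^∞(ℝⁿ) and x ∈ ℝⁿ, ( ∫₀^∞ | ∫_{|x−y| > ρ(x)} t ∂_t K_t(x,y) f(y) dy |² dt/t )^{1/2} ≤ C M_γ(f)(x), where M_γ(f)(x) := sup_{B ∋ x} (Ψ_γ(B)|B|)^{−1} ∫_B |f| with Ψ_γ(B) := (1 + r_B/ρ(x_B))^γ. -/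

import Mathlib

open MeasureTheory Metric Set
open scoped ENNReal NNReal

noncomputable section

/-- `ℝⁿ`. -/
abbrev Rn (n : ℕ) := EuclideanSpace ℝ (Fin n)

/-- The adapted (Hardy–Littlewood type) maximal function
`M_γ f (x) = sup_{B ∋ x} (Ψ_γ(B)|B|)⁻¹ ∫_B |f|` with `Ψ_γ(B) = (1+r_B/ρ(x_B))^γ`. -/
def adaptedMaximal (n : ℕ) (γ : ℝ) (ρ f : Rn n → ℝ) (x : Rn n) : ℝ≥0∞ :=
  ⨆ (z : Rn n) (r : ℝ) (_ : 0 < r) (_ : x ∈ ball z r),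
    (ENNReal.ofReal ((1 + r / ρ z) ^ γ) * volume (ball z r))⁻¹ *
      ∫⁻ y in ball z r, ENNReal.ofReal |f y|


/-- `e^{-s} ≤ C s^{-A}` for `s > 0`. -/
lemma exp_neg_le_rpow (A : ℝ) (hA : 0 < A) :
    ∃ C ≥ (1:ℝ), ∀ s : ℝ, 0 < s → Real.exp (-s) ≤ C * s ^ (-A) := by
  set k := ⌈A⌉₊ with hk
  refine ⟨(k.factorial : ℝ), by exact_mod_cast Nat.one_le_iff_ne_zero.mpr k.factorial_ne_zero, ?_⟩
  intro s hs
  have hfac : (1:ℝ) ≤ k.factorial := by exact_mod_cast Nat.one_le_iff_ne_zero.mpr k.factorial_ne_zero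
  rcases le_or_gt 1 s with h1 | h1
  · -- s ≥ 1 : e^s ≥ s^k/k!, s^A ≤ s^k
    have hsk : s ^ (k:ℕ) / (k.factorial : ℝ) ≤ Real.exp s := by
      have := Real.sum_le_exp_of_nonneg (le_of_lt hs) (k+1)
      refine le_trans ?_ this
      have : s ^ (k:ℕ) / (k.factorial : ℝ) = ∑ i ∈ Finset.range (k+1), if i = k then s^i / i.factorial else 0 := by
        simp
      rw [this]
      apply Finset.sum_le_sum
      intro i hi
      split
      · simp
      · positivity
    have hA_le : s ^ A ≤ s ^ (k:ℕ) := by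
      rw [← Real.rpow_natCast s k]
      exact Real.rpow_le_rpow_of_exponent_le h1 (Nat.le_ceil A)
    have hexp : Real.exp (-s) = (Real.exp s)⁻¹ := by rw [Real.exp_neg]
    rw [hexp, Real.rpow_neg hs.le]
    have hsApos : 0 < s ^ A := Real.rpow_pos_of_pos hs A
    have hexppos : 0 < Real.exp s := Real.exp_pos s
    calc (Real.exp s)⁻¹ ≤ (s ^ (k:ℕ) / (k.factorial : ℝ))⁻¹ := by
          apply inv_anti₀
          · positivity
          · exact hsk
      _ = (k.factorial : ℝ) * (s ^ (k:ℕ))⁻¹ := by field_simp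
      _ ≤ (k.factorial : ℝ) * (s ^ A)⁻¹ := by
          gcongr
  · -- s < 1
    have h2 : Real.exp (-s) ≤ 1 := Real.exp_le_one_iff.mpr (by linarith)
    have h3 : (1:ℝ) ≤ s ^ (-A) :=
      Real.one_le_rpow_of_pos_of_le_one_of_nonpos hs h1.le (by linarith)
    nlinarith [Real.rpow_pos_of_pos hs (-A)]

/-- Dyadic localization. -/
lemma exists_dyadic {ρ d : ℝ} (hρ : 0 < ρ) (hd : ρ < d) :
    ∃ j : ℕ, 2 ^ j * ρ ≤ d ∧ d < 2 ^ (j+1) * ρ := by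
  have hd1 : 1 < d / ρ := (one_lt_div hρ).mpr hd
  obtain ⟨m, hm⟩ := pow_unbounded_of_one_lt (d / ρ) (by norm_num : (1:ℝ) < 2)
  have hex : ∃ m : ℕ, d / ρ < 2 ^ (m+1) := ⟨m, lt_of_lt_of_le hm (by
    apply pow_le_pow_right₀ (by norm_num) (Nat.le_succ m))⟩
  classical
  let j := Nat.find hex
  refine ⟨j, ?_, ?_⟩
  · have : (2:ℝ) ^ j ≤ d / ρ := by
      rcases Nat.eq_zero_or_pos j with h0 | hpos
      · rw [h0]; simpa using hd1.le
      · obtain ⟨i, hji⟩ := Nat.exists_eq_succ_of_ne_zero hpos.ne'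
        have h := Nat.find_min hex (m := i) (by omega)
        push_neg at h
        rw [show j = i + 1 from hji]
        simpa using h
    calc 2 ^ j * ρ ≤ (d / ρ) * ρ := by gcongr
      _ = d := by field_simp
  · have : d / ρ < 2 ^ (j+1) := Nat.find_spec hex
    calc d = (d / ρ) * ρ := by field_simp
      _ < 2 ^ (j+1) * ρ := by gcongr

/-- Integrability of the profile function. -/
lemma Phi_integrable (c γ : ℝ) (hc : 0 < c) (hγ : 0 < γ) :
    IntegrableOn (fun u : ℝ => u ^ γ * (1 + Real.sqrt u) ^ (-(2*γ+4)) * Real.exp (-c / u))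
      (Ioi (0:ℝ)) volume := by
  have hmeas : AEStronglyMeasurable
      (fun u : ℝ => u ^ γ * (1 + Real.sqrt u) ^ (-(2*γ+4)) * Real.exp (-c / u))
      (volume.restrict (Ioi (0:ℝ))) := by
    apply ContinuousOn.aestronglyMeasurable ?_ measurableSet_Ioi
    apply ContinuousOn.mul
    apply ContinuousOn.mul
    · exact fun u hu => (Real.continuousAt_rpow_const u γ (Or.inl (ne_of_gt hu))).continuousWithinAt
    · intro u hu
      apply ContinuousWithinAt.rpow_const
      · exact (continuous_const.add Real.continuous_sqrt).continuousWithinAt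
      · left; positivity
    · exact (Real.continuous_exp.comp_continuousOn
        (continuousOn_const.div continuousOn_id (fun y hy => ne_of_gt hy)))
  rw [show Ioi (0:ℝ) = Ioc 0 1 ∪ Ioi 1 by rw [Ioc_union_Ioi_eq_Ioi]; norm_num]
  apply IntegrableOn.union
  · -- on (0,1]: bounded by 1
    apply Integrable.mono' (integrable_const (1:ℝ))
    · exact hmeas.mono_set (by rw [show Ioi (0:ℝ) = Ioc 0 1 ∪ Ioi 1 by rw [Ioc_union_Ioi_eq_Ioi]; norm_num]; exact subset_union_left)
    · filter_upwards [ae_restrict_mem measurableSet_Ioc] with u hu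
      obtain ⟨hu0, hu1⟩ := hu
      rw [Real.norm_eq_abs, abs_of_nonneg (by positivity)]
      have h1 : u ^ γ ≤ 1 := Real.rpow_le_one hu0.le hu1 hγ.le
      have h2 : (1 + Real.sqrt u) ^ (-(2*γ+4)) ≤ 1 :=
        Real.rpow_le_one_of_one_le_of_nonpos (by nlinarith [Real.sqrt_nonneg u]) (by linarith)
      have h3 : Real.exp (-c / u) ≤ 1 := by
        apply Real.exp_le_one_iff.mpr
        have h : 0 < c / u := by positivity
        rw [neg_div]; linarith
      have p2 : (0:ℝ) ≤ (1 + Real.sqrt u) ^ (-(2*γ+4)) := by positivity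
      have p1 : (0:ℝ) ≤ u ^ γ := by positivity
      nlinarith [Real.exp_pos (-c/u), mul_le_one₀ h1 p2 h2]
  · -- on (1,∞): bounded by u ^ (-2)
    apply Integrable.mono' (integrableOn_Ioi_rpow_of_lt (by norm_num : (-2:ℝ) < -1) one_pos)
    · exact hmeas.mono_set (by rw [show Ioi (0:ℝ) = Ioc 0 1 ∪ Ioi 1 by rw [Ioc_union_Ioi_eq_Ioi]; norm_num]; exact subset_union_right)
    · filter_upwards [ae_restrict_mem measurableSet_Ioi] with u hu
      have hu1 : (1:ℝ) < u := hu
      have hu0 : (0:ℝ) < u := lt_trans one_pos hu1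
      rw [Real.norm_eq_abs, abs_of_nonneg (by positivity)]
      have hs : 0 < Real.sqrt u := Real.sqrt_pos.mpr hu0
      have h2 : (1 + Real.sqrt u) ^ (-(2*γ+4)) ≤ (Real.sqrt u) ^ (-(2*γ+4)) :=
        Real.rpow_le_rpow_of_nonpos hs (by linarith) (by linarith)
      have h2' : (Real.sqrt u) ^ (-(2*γ+4)) = u ^ (-(γ+2)) := by
        rw [show Real.sqrt u = u ^ ((1:ℝ)/2) from Real.sqrt_eq_rpow u,
          ← Real.rpow_mul hu0.le]
        ring_nf
      have h3 : Real.exp (-c / u) ≤ 1 := by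
        apply Real.exp_le_one_iff.mpr
        have h : 0 < c / u := by positivity
        rw [neg_div]; linarith
      calc u ^ γ * (1 + Real.sqrt u) ^ (-(2*γ+4)) * Real.exp (-c / u)
          ≤ u ^ γ * u ^ (-(γ+2)) * 1 := by
            rw [h2'] at h2
            apply mul_le_mul (by
              apply mul_le_mul_of_nonneg_left h2 (by positivity)) h3 (Real.exp_pos _).le (by positivity)
        _ = u ^ (-2 : ℝ) := by
            rw [mul_one, ← Real.rpow_add hu0]; norm_num
lemma aj_bound (n : ℕ) (γ ρ : ℝ) (hγ : 0 < γ) (hρ : 0 < ρ) (j : ℕ) :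
    ((2:ℝ)^j * ρ) ^ (-((n:ℝ)+γ+1)) * (1 + (2:ℝ)^(j+1)) ^ γ * ((2:ℝ)^(j+1) * ρ)^n
      ≤ 2 ^ n * 4 ^ γ * ρ ^ (-(γ+1)) * (1/2:ℝ)^j := by
  set A := (n:ℝ)+γ+1 with hA
  set b := (2:ℝ)^j with hbdef
  have hb1 : (1:ℝ) ≤ b := one_le_pow₀ (by norm_num)
  have hb0 : (0:ℝ) < b := lt_of_lt_of_le one_pos hb1
  have h2j1 : (2:ℝ)^(j+1) = 2*b := by rw [hbdef, pow_succ]; ring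
  have e1 : ((2:ℝ)^j * ρ) ^ (-A) = b ^ (-A) * ρ ^ (-A) :=
    Real.mul_rpow hb0.le hρ.le
  have e2 : (1 + (2:ℝ)^(j+1)) ^ γ ≤ (4*b) ^ γ := by
    apply Real.rpow_le_rpow (by positivity) (by rw [h2j1]; linarith) hγ.le
  have e3 : ((4:ℝ)*b) ^ γ = 4^γ * b^γ := Real.mul_rpow (by norm_num) hb0.le
  have e4 : ((2:ℝ)^(j+1) * ρ)^n = 2^n * b^n * ρ^n := by
    rw [h2j1, mul_pow, mul_pow]
  have e5 : b ^ (-A) * b^γ * (b^n : ℝ) = b⁻¹ := by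
    rw [← Real.rpow_natCast b n, ← Real.rpow_add hb0, ← Real.rpow_add hb0]
    have : -A + γ + (n:ℝ) = -1 := by rw [hA]; ring
    rw [this, Real.rpow_neg_one]
  have e6 : ρ ^ (-A) * (ρ^n : ℝ) = ρ ^ (-(γ+1)) := by
    rw [← Real.rpow_natCast ρ n, ← Real.rpow_add hρ]
    congr 1
    rw [hA]; ring
  have key : ((2:ℝ)^j * ρ) ^ (-A) * (1 + (2:ℝ)^(j+1)) ^ γ * ((2:ℝ)^(j+1) * ρ)^n
      ≤ (b ^ (-A) * ρ ^ (-A)) * (4^γ * b^γ) * (2^n * b^n * ρ^n) := by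
    rw [e1, e4]
    have hb' : (0:ℝ) < b ^ (-A) * ρ ^ (-A) := by positivity
    calc b ^ (-A) * ρ ^ (-A) * (1 + (2:ℝ)^(j+1)) ^ γ * (2 ^ n * b ^ n * ρ ^ n)
        ≤ b ^ (-A) * ρ ^ (-A) * ((4*b) ^ γ) * (2 ^ n * b ^ n * ρ ^ n) := by
          gcongr
      _ = (b ^ (-A) * ρ ^ (-A)) * (4^γ * b^γ) * (2^n * b^n * ρ^n) := by rw [e3]
  refine le_trans key (le_of_eq ?_)
  have hinv : (1/2:ℝ)^j = b⁻¹ := by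
    rw [hbdef, one_div, inv_pow]
  rw [hinv]
  calc (b ^ (-A) * ρ ^ (-A)) * (4^γ * b^γ) * (2^n * b^n * ρ^n)
      = (2:ℝ)^n * 4^γ * (ρ ^ (-A) * ρ^n) * (b ^ (-A) * b^γ * b^n) := by ring
    _ = 2 ^ n * 4 ^ γ * ρ ^ (-(γ+1)) * b⁻¹ := by rw [e5, e6]

lemma max_ball (n : ℕ) (hn : 1 ≤ n) (γ : ℝ) (ρ f : Rn n → ℝ) (hρ : ∀ x, 0 < ρ x)
    (x : Rn n) (r : ℝ) (hr : 0 < r) :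
    ∫⁻ y in ball x r, ENNReal.ofReal |f y| ≤
      ENNReal.ofReal ((1 + r / ρ x) ^ γ) * volume (ball x r) * adaptedMaximal n γ ρ f x := by
  have hnt : Nontrivial (Rn n) :=
    Module.nontrivial_of_finrank_pos (R := ℝ) (by rw [finrank_euclideanSpace_fin]; omega)
  set c := ENNReal.ofReal ((1 + r / ρ x) ^ γ) * volume (ball x r) with hc
  have hpos : (0:ℝ) < (1 + r / ρ x) ^ γ := by
    apply Real.rpow_pos_of_pos
    have := hρ x
    positivity
  have hc0 : c ≠ 0 := by
    rw [hc]
    apply mul_ne_zero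
    · simpa using hpos
    · exact (measure_ball_pos volume x hr).ne'
  have hctop : c ≠ ⊤ := by
    rw [hc]
    exact ENNReal.mul_ne_top ENNReal.ofReal_ne_top measure_ball_lt_top.ne
  have hle : c⁻¹ * ∫⁻ y in ball x r, ENNReal.ofReal |f y| ≤ adaptedMaximal n γ ρ f x := by
    rw [adaptedMaximal]
    refine le_trans (le_of_eq rfl) ?_
    have h1 : x ∈ ball x r := mem_ball_self hr
    exact le_iSup_of_le x (le_iSup_of_le r (le_iSup_of_le hr (le_iSup_of_le h1 le_rfl)))
  calc ∫⁻ y in ball x r, ENNReal.ofReal |f y|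
      = c * (c⁻¹ * ∫⁻ y in ball x r, ENNReal.ofReal |f y|) := by
        rw [← mul_assoc, ENNReal.mul_inv_cancel hc0 hctop, one_mul]
    _ ≤ c * adaptedMaximal n γ ρ f x := mul_le_mul_right hle c

lemma exp_factor {c A t ρ d C₁ : ℝ} (hc : 0 < c) (ht : 0 < t) (hρ : 0 < ρ) (hd : ρ < d)
    (hexp : ∀ s : ℝ, 0 < s → Real.exp (-s) ≤ C₁ * s ^ (-(A/2))) :
    Real.exp (-c * d^2 / t) ≤
      C₁ * (c/(2*t)) ^ (-(A/2)) * Real.exp (-(c * ρ^2) / (2*t)) * d ^ (-A) := by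
  have hd0 : 0 < d := lt_trans hρ hd
  have h1 : -c * d^2/t = (-(c*d^2/(2*t))) + (-(c*d^2/(2*t))) := by ring
  rw [h1, Real.exp_add]
  have hs : 0 < c*d^2/(2*t) := by positivity
  have f1 : Real.exp (-(c*d^2/(2*t))) ≤ C₁ * (c*d^2/(2*t)) ^ (-(A/2)) := hexp _ hs
  have f2 : Real.exp (-(c*d^2/(2*t))) ≤ Real.exp (-(c*ρ^2)/(2*t)) := by
    apply Real.exp_le_exp.mpr
    rw [neg_div]
    have h2 : ρ^2 ≤ d^2 := by nlinarith
    have h3 : c*ρ^2/(2*t) ≤ c*d^2/(2*t) := by gcongr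
    linarith
  have f3 : (c*d^2/(2*t)) ^ (-(A/2)) = (c/(2*t)) ^ (-(A/2)) * d ^ (-A) := by
    rw [show c*d^2/(2*t) = (c/(2*t)) * d^2 by ring,
      Real.mul_rpow (by positivity) (by positivity)]
    congr 1
    rw [← Real.rpow_natCast d 2, ← Real.rpow_mul hd0.le]
    congr 1
    push_cast
    ring
  have hC₁ : 0 ≤ C₁ := by
    have := hexp 1 one_pos
    nlinarith [Real.exp_pos (-(1:ℝ)), Real.one_rpow (-(A/2))]
  calc Real.exp (-(c*d^2/(2*t))) * Real.exp (-(c*d^2/(2*t)))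
      ≤ (C₁ * (c*d^2/(2*t)) ^ (-(A/2))) * Real.exp (-(c*ρ^2)/(2*t)) := by
        apply mul_le_mul f1 f2 (Real.exp_pos _).le (by positivity)
    _ = C₁ * (c/(2*t)) ^ (-(A/2)) * Real.exp (-(c*ρ^2)/(2*t)) * d ^ (-A) := by
        rw [f3]; ring

lemma Esq_eq {C₀ C₁ c γ ρ : ℝ} (n : ℕ) (hc : 0 < c) (hρ : 0 < ρ) {t : ℝ} (ht : 0 < t) :
    (C₀ * C₁ * t ^ (-(n:ℝ)/2) * (1 + Real.sqrt t / ρ) ^ (-(γ+2)) *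
        (c/(2*t)) ^ (-(((n:ℝ)+γ+1)/2)) * Real.exp (-(c*ρ^2)/(2*t)))^2 / t
      = (C₀^2 * C₁^2 * (c/2) ^ (-((n:ℝ)+γ+1))) *
          (t ^ γ * (1 + Real.sqrt t / ρ) ^ (-(2*γ+4)) * Real.exp (-(c*ρ^2)/t)) := by
  set A := (n:ℝ)+γ+1 with hA
  have hq : 0 < 1 + Real.sqrt t / ρ := by positivity
  have sq1 : ∀ (x p : ℝ), 0 < x → (x^p)^2 = x^(2*p) := by
    intro x p hx
    rw [sq, ← Real.rpow_add hx]; ring_nf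
  have e1 : (t ^ (-(n:ℝ)/2))^2 = t ^ (-(n:ℝ)) := by rw [sq1 t _ ht]; ring_nf
  have e2 : ((1 + Real.sqrt t / ρ) ^ (-(γ+2)))^2 = (1 + Real.sqrt t / ρ) ^ (-(2*γ+4)) := by
    rw [sq1 _ _ hq]; ring_nf
  have e3 : ((c/(2*t)) ^ (-(A/2)))^2 = (c/2) ^ (-A) * t ^ A := by
    rw [sq1 _ _ (by positivity), show (2:ℝ) * -(A/2) = -A by ring,
      show c/(2*t) = (c/2)/t by ring,
      Real.div_rpow (by positivity) ht.le, Real.rpow_neg (by positivity : (0:ℝ) ≤ c/2),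
      Real.rpow_neg ht.le]
    field_simp
  have e4 : (Real.exp (-(c*ρ^2)/(2*t)))^2 = Real.exp (-(c*ρ^2)/t) := by
    rw [sq, ← Real.exp_add]
    congr 1
    field_simp
    ring
  have e5 : t ^ (-(n:ℝ)) * t ^ A / t = t ^ γ := by
    rw [← Real.rpow_add ht, div_eq_mul_inv, ← Real.rpow_neg_one t, ← Real.rpow_add ht]
    congr 1
    rw [hA]; ring
  calc (C₀ * C₁ * t ^ (-(n:ℝ)/2) * (1 + Real.sqrt t / ρ) ^ (-(γ+2)) *
        (c/(2*t)) ^ (-(A/2)) * Real.exp (-(c*ρ^2)/(2*t)))^2 / t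
      = C₀^2 * C₁^2 * ((t ^ (-(n:ℝ)/2))^2) * (((1 + Real.sqrt t / ρ) ^ (-(γ+2)))^2) *
          (((c/(2*t)) ^ (-(A/2)))^2) * ((Real.exp (-(c*ρ^2)/(2*t)))^2) / t := by ring
    _ = C₀^2 * C₁^2 * (c/2) ^ (-A) * (t ^ (-(n:ℝ)) * t ^ A / t) *
          (1 + Real.sqrt t / ρ) ^ (-(2*γ+4)) * Real.exp (-(c*ρ^2)/t) := by
        rw [e1, e2, e3, e4]; ring
    _ = (C₀^2 * C₁^2 * (c/2) ^ (-A)) *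
          (t ^ γ * (1 + Real.sqrt t / ρ) ^ (-(2*γ+4)) * Real.exp (-(c*ρ^2)/t)) := by
        rw [e5]; ring
lemma Theta_facts (γ c ρ : ℝ) (hγ : 0 < γ) (hc : 0 < c) (hρ : 0 < ρ) :
    IntegrableOn (fun t : ℝ => t ^ γ * (1 + Real.sqrt t / ρ) ^ (-(2*γ+4)) *
        Real.exp (-(c*ρ^2)/t)) (Ioi (0:ℝ)) volume ∧
    ∫ t in Ioi (0:ℝ), t ^ γ * (1 + Real.sqrt t / ρ) ^ (-(2*γ+4)) * Real.exp (-(c*ρ^2)/t)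
      = ρ ^ (2*γ+2) *
          ∫ u in Ioi (0:ℝ), u ^ γ * (1 + Real.sqrt u) ^ (-(2*γ+4)) * Real.exp (-c/u) := by
  set Θ : ℝ → ℝ := fun t => t ^ γ * (1 + Real.sqrt t / ρ) ^ (-(2*γ+4)) * Real.exp (-(c*ρ^2)/t)
    with hΘ
  set Φ : ℝ → ℝ := fun u => u ^ γ * (1 + Real.sqrt u) ^ (-(2*γ+4)) * Real.exp (-c/u) with hΦdef
  have hρ2 : (0:ℝ) < ρ^2 := by positivity
  have hkey : EqOn (fun u => ρ ^ (2*γ) * Φ u) (fun u => Θ (ρ^2 * u)) (Ioi (0:ℝ)) := by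
    intro u hu
    have hu0 : (0:ℝ) < u := hu
    have h1 : (ρ^2 * u) ^ γ = ρ ^ (2*γ) * u ^ γ := by
      rw [Real.mul_rpow (by positivity) hu0.le, ← Real.rpow_natCast ρ 2,
        ← Real.rpow_mul hρ.le]
      norm_num
    have h2 : Real.sqrt (ρ^2 * u) / ρ = Real.sqrt u := by
      rw [Real.sqrt_mul (by positivity), Real.sqrt_sq hρ.le]
      field_simp
    have h3 : -(c*ρ^2)/(ρ^2 * u) = -c/u := by
      field_simp
    simp only [hΘ, hΦdef]
    rw [h1, h2, h3]
    ring
  have hΦint := Phi_integrable c γ hc hγ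
  have h1 : IntegrableOn (fun u => Θ (ρ^2 * u)) (Ioi (0:ℝ)) volume := by
    refine IntegrableOn.congr_fun ?_ hkey measurableSet_Ioi
    exact hΦint.const_mul _
  constructor
  · have := (integrableOn_Ioi_comp_mul_left_iff Θ 0 hρ2).mp h1
    rwa [mul_zero] at this
  · have hval := integral_comp_mul_left_Ioi Θ 0 hρ2
    rw [mul_zero] at hval
    have hL : ∫ u in Ioi (0:ℝ), Θ (ρ^2 * u) = ρ ^ (2*γ) * ∫ u in Ioi (0:ℝ), Φ u := by
      rw [← MeasureTheory.integral_const_mul]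
      exact setIntegral_congr_fun measurableSet_Ioi hkey |>.symm
    rw [hL] at hval
    have : ∫ t in Ioi (0:ℝ), Θ t = ρ^2 * (ρ ^ (2*γ) * ∫ u in Ioi (0:ℝ), Φ u) := by
      rw [hval, smul_eq_mul, ← mul_assoc, mul_inv_cancel₀ (ne_of_gt hρ2), one_mul]
    rw [this, ← mul_assoc]
    congr 1
    rw [← Real.rpow_natCast ρ 2, ← Real.rpow_add hρ]
    norm_num
    ring_nf
lemma geom_sum_ofReal : ∑' j:ℕ, ENNReal.ofReal ((1/2:ℝ)^j) = 2 := by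
  have h : ∀ j:ℕ, ENNReal.ofReal ((1/2:ℝ)^j) = (2⁻¹ : ℝ≥0∞)^j := by
    intro j
    rw [ENNReal.ofReal_pow (by norm_num)]
    congr 1
    rw [one_div, ENNReal.ofReal_inv_of_pos two_pos]
    norm_num
  rw [tsum_congr h, ENNReal.tsum_geometric]
  rw [ENNReal.one_sub_inv_two, inv_inv]

lemma P_le (n : ℕ) (hn : 1 ≤ n) (γ : ℝ) (hγ : 0 < γ) (ρ f : Rn n → ℝ)
    (hρ : ∀ x, 0 < ρ x) (x : Rn n) :
    ∫⁻ y in {y : Rn n | ρ x < dist x y},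
        ENNReal.ofReal (dist x y ^ (-((n:ℝ)+γ+1)) * |f y|)
      ≤ ENNReal.ofReal (2^(n+1) * 4^γ * ρ x ^ (-(γ+1))) * volume (ball (0:Rn n) 1) *
          adaptedMaximal n γ ρ f x := by
  have hnt : Nontrivial (Rn n) :=
    Module.nontrivial_of_finrank_pos (R := ℝ) (by rw [finrank_euclideanSpace_fin]; omega)
  set A := (n:ℝ)+γ+1 with hA
  set M := adaptedMaximal n γ ρ f x with hM
  set V := volume (ball (0:Rn n) 1) with hV
  set rx := ρ x with hrx
  have hrx0 : 0 < rx := hρ x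
  set Cρ := (2:ℝ)^n * 4^γ * rx ^ (-(γ+1)) with hCρ
  have hCρ0 : 0 ≤ Cρ := by positivity
  set T : ℕ → Set (Rn n) := fun j => ball x ((2:ℝ)^(j+1)*rx) \ ball x ((2:ℝ)^j*rx) with hT
  have hcover : {y : Rn n | rx < dist x y} ⊆ ⋃ j, T j := by
    intro y hy
    obtain ⟨j, h1, h2⟩ := exists_dyadic hrx0 hy
    refine mem_iUnion.mpr ⟨j, ?_, ?_⟩
    · rw [mem_ball, dist_comm]; exact h2
    · rw [mem_ball, dist_comm]; exact not_lt.mpr h1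
  have termbound : ∀ j : ℕ,
      (∫⁻ y in T j, ENNReal.ofReal (dist x y ^ (-A) * |f y|))
        ≤ ENNReal.ofReal (Cρ * (1/2:ℝ)^j) * (V * M) := by
    intro j
    have hrj : (0:ℝ) < (2:ℝ)^j * rx := by positivity
    have hrj1 : (0:ℝ) < (2:ℝ)^(j+1) * rx := by positivity
    have hTm : MeasurableSet (T j) := measurableSet_ball.diff measurableSet_ball
    have hdiv : (1 + ((2:ℝ)^(j+1) * rx) / rx) = 1 + (2:ℝ)^(j+1) := by
      field_simp
    calc ∫⁻ y in T j, ENNReal.ofReal (dist x y ^ (-A) * |f y|)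
        ≤ ∫⁻ y in T j, ENNReal.ofReal (((2:ℝ)^j * rx) ^ (-A)) * ENNReal.ofReal |f y| := by
          apply setLIntegral_mono' hTm
          intro y hy
          have hd : (2:ℝ)^j * rx ≤ dist x y := by
            have := hy.2
            rw [mem_ball, dist_comm] at this
            exact not_lt.mp this
          rw [← ENNReal.ofReal_mul (by positivity)]
          apply ENNReal.ofReal_le_ofReal
          apply mul_le_mul_of_nonneg_right _ (abs_nonneg _)
          exact Real.rpow_le_rpow_of_nonpos hrj hd (by rw [hA]; push_cast; nlinarith [Nat.cast_nonneg (α := ℝ) n])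
      _ = ENNReal.ofReal (((2:ℝ)^j * rx) ^ (-A)) * ∫⁻ y in T j, ENNReal.ofReal |f y| :=
          lintegral_const_mul' _ _ ENNReal.ofReal_ne_top
      _ ≤ ENNReal.ofReal (((2:ℝ)^j * rx) ^ (-A)) *
            (ENNReal.ofReal ((1 + ((2:ℝ)^(j+1) * rx) / rx) ^ γ) *
              volume (ball x ((2:ℝ)^(j+1)*rx)) * M) := by
          apply mul_le_mul_right
          refine le_trans (lintegral_mono_set diff_subset) ?_
          exact max_ball n hn γ ρ f hρ x _ hrj1
      _ = ENNReal.ofReal (((2:ℝ)^j * rx) ^ (-A)) *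
            (ENNReal.ofReal ((1 + (2:ℝ)^(j+1)) ^ γ) *
              ((ENNReal.ofReal (((2:ℝ)^(j+1)*rx)^n) * V) * M)) := by
          rw [hdiv, Measure.addHaar_ball volume x hrj1.le, finrank_euclideanSpace_fin]
          ring
      _ = ENNReal.ofReal (((2:ℝ)^j * rx) ^ (-A) * (1 + (2:ℝ)^(j+1)) ^ γ *
            ((2:ℝ)^(j+1)*rx)^n) * (V * M) := by
          rw [ENNReal.ofReal_mul (by positivity), ENNReal.ofReal_mul (by positivity)]
          ring
      _ ≤ ENNReal.ofReal (Cρ * (1/2:ℝ)^j) * (V * M) := by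
          apply mul_le_mul_left
          apply ENNReal.ofReal_le_ofReal
          rw [hCρ]
          exact aj_bound n γ rx hγ hrx0 j
  calc ∫⁻ y in {y : Rn n | rx < dist x y}, ENNReal.ofReal (dist x y ^ (-A) * |f y|)
      ≤ ∫⁻ y in ⋃ j, T j, ENNReal.ofReal (dist x y ^ (-A) * |f y|) :=
        lintegral_mono_set hcover
    _ ≤ ∑' j, ∫⁻ y in T j, ENNReal.ofReal (dist x y ^ (-A) * |f y|) :=
        lintegral_iUnion_le _ _
    _ ≤ ∑' j, ENNReal.ofReal (Cρ * (1/2:ℝ)^j) * (V * M) :=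
        ENNReal.tsum_le_tsum termbound
    _ = (∑' j, ENNReal.ofReal Cρ * ENNReal.ofReal ((1/2:ℝ)^j)) * (V * M) := by
        rw [ENNReal.tsum_mul_right]
        congr 1
        exact tsum_congr fun j => by rw [← ENNReal.ofReal_mul hCρ0]
    _ = ENNReal.ofReal Cρ * (∑' j, ENNReal.ofReal ((1/2:ℝ)^j)) * (V * M) := by
        rw [ENNReal.tsum_mul_left]
    _ = ENNReal.ofReal Cρ * 2 * (V * M) := by rw [geom_sum_ofReal]
    _ = ENNReal.ofReal (2^(n+1) * 4^γ * rx ^ (-(γ+1))) * V * M := by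
        rw [show ENNReal.ofReal Cρ * 2 = ENNReal.ofReal (2^(n+1) * 4^γ * rx ^ (-(γ+1))) by
          rw [show (2:ℝ≥0∞) = ENNReal.ofReal (2:ℝ) by norm_num,
            ← ENNReal.ofReal_mul hCρ0]
          congr 1
          rw [hCρ]; ring]
        ring

set_option maxHeartbeats 1000000 in
/-- Off-diagonal bounds for `t ∂_t K_t` imply that the global part of the vertical
square function is controlled by the adapted maximal function `M_γ`. -/
theorem global_square_function_le_adaptedMaximal (n : ℕ) (hn : 3 ≤ n)
    (ρ : Rn n → ℝ) (hρ : ∀ x, 0 < ρ x) (K : ℝ → Rn n → Rn n → ℝ)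
    (hK : ∀ N > (0 : ℝ), ∃ C_N > (0 : ℝ), ∃ c > (0 : ℝ), ∀ t : ℝ, 0 < t →
      ∀ x y : Rn n, |t * deriv (fun s => K s x y) t| ≤
        C_N * t ^ (-(n : ℝ) / 2) * Real.exp (-c * (dist x y) ^ 2 / t) *
          (1 + Real.sqrt t / ρ x) ^ (-N)) :
    ∀ γ > (0 : ℝ), ∃ C > (0 : ℝ), ∀ f : Rn n → ℝ, ContDiff ℝ (⊤ : ℕ∞) f →
      HasCompactSupport f → ∀ x : Rn n,
      ENNReal.ofReal
          ((∫ t in Ioi (0 : ℝ),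
              (∫ y in {y : Rn n | ρ x < dist x y},
                t * deriv (fun s => K s x y) t * f y) ^ 2 / t) ^ ((1 : ℝ) / 2)) ≤
        ENNReal.ofReal C * adaptedMaximal n γ ρ f x := by
  intro γ hγ
  obtain ⟨C₀, hC₀, c, hc, hKb⟩ := hK (γ+2) (by linarith)
  obtain ⟨C₁, hC₁, hexp⟩ := exp_neg_le_rpow (((n:ℝ)+γ+1)/2) (by positivity)
  have hC₁0 : (0:ℝ) < C₁ := lt_of_lt_of_le one_pos hC₁
  set v₁ := (volume (ball (0:Rn n) 1)).toReal with hv₁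
  have hv₁0 : 0 ≤ v₁ := ENNReal.toReal_nonneg
  have hK₂0 : (0:ℝ) < 2^(n+1) * 4^γ := by positivity
  set K₃ := C₀^2 * C₁^2 * (c/2) ^ (-((n:ℝ)+γ+1)) with hK₃
  have hK₃0 : (0:ℝ) < K₃ := by
    rw [hK₃]
    have : (0:ℝ) < (c/2) ^ (-((n:ℝ)+γ+1)) := Real.rpow_pos_of_pos (by positivity) _
    positivity
  set W₀ := ∫ u in Ioi (0:ℝ), u ^ γ * (1 + Real.sqrt u) ^ (-(2*γ+4)) * Real.exp (-c/u)
    with hW₀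
  have hW₀0 : 0 ≤ W₀ := by
    rw [hW₀]
    apply setIntegral_nonneg measurableSet_Ioi
    intro u hu
    have hu0 : (0:ℝ) < u := hu
    positivity
  set X := (2^(n+1) * 4^γ:ℝ)^2 * v₁^2 * K₃ * W₀ with hX
  have hX0 : 0 ≤ X := by rw [hX]; positivity
  refine ⟨Real.sqrt X + 1, by positivity, ?_⟩
  set C := Real.sqrt X + 1 with hCdef
  have hCpos : 0 < C := by rw [hCdef]; positivity
  intro f hf1 hf2 x
  set M := adaptedMaximal n γ ρ f x with hM
  by_cases hMtop : M = ⊤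
  · rw [hMtop, ENNReal.mul_top (ENNReal.ofReal_pos.mpr hCpos).ne']
    exact le_top
  have hρx := hρ x
  set rx := ρ x with hrx
  set m := M.toReal with hm
  have hm0 : 0 ≤ m := ENNReal.toReal_nonneg
  have hMm : M = ENNReal.ofReal m := (ENNReal.ofReal_toReal hMtop).symm
  have hV : volume (ball (0:Rn n) 1) = ENNReal.ofReal v₁ :=
    (ENNReal.ofReal_toReal measure_ball_lt_top.ne).symm
  set B := 2^(n+1) * 4^γ * rx ^ (-(γ+1)) * v₁ * m with hB
  have hrxp : (0:ℝ) < rx ^ (-(γ+1)) := Real.rpow_pos_of_pos hρx _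
  have hB0 : 0 ≤ B := by
    rw [hB]
    have := hK₂0
    positivity
  set S := {y : Rn n | rx < dist x y} with hS
  have hSmeas : MeasurableSet S := by
    apply measurableSet_lt measurable_const
    exact (Continuous.dist continuous_const continuous_id).measurable
  set E : ℝ → ℝ := fun t => C₀ * C₁ * t ^ (-(n:ℝ)/2) * (1 + Real.sqrt t / rx) ^ (-(γ+2)) *
    (c/(2*t)) ^ (-(((n:ℝ)+γ+1)/2)) * Real.exp (-(c * rx^2) / (2*t)) with hE
  have hE0 : ∀ t : ℝ, 0 < t → 0 ≤ E t := by
    intro t ht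
    rw [hE]
    have h1 : (0:ℝ) ≤ t ^ (-(n:ℝ)/2) := Real.rpow_nonneg ht.le _
    have h2 : (0:ℝ) ≤ (1 + Real.sqrt t / rx) ^ (-(γ+2)) :=
      Real.rpow_nonneg (by positivity) _
    have h3 : (0:ℝ) ≤ (c/(2*t)) ^ (-(((n:ℝ)+γ+1)/2)) := Real.rpow_nonneg (by positivity) _
    have h4 : (0:ℝ) ≤ Real.exp (-(c * rx^2) / (2*t)) := (Real.exp_pos _).le
    positivity
  -- pointwise bound on the inner integral
  have hI : ∀ t : ℝ, 0 < t →
      |∫ y in S, t * deriv (fun s => K s x y) t * f y| ≤ E t * B := by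
    intro t ht
    have key : ENNReal.ofReal |∫ y in S, t * deriv (fun s => K s x y) t * f y| ≤
        ENNReal.ofReal (E t * B) := by
      calc ENNReal.ofReal |∫ y in S, t * deriv (fun s => K s x y) t * f y|
          = ‖∫ y in S, t * deriv (fun s => K s x y) t * f y‖ₑ :=
            (Real.enorm_eq_ofReal_abs _).symm
        _ ≤ ∫⁻ y in S, ‖t * deriv (fun s => K s x y) t * f y‖ₑ :=
            enorm_integral_le_lintegral_enorm _
        _ = ∫⁻ y in S, ENNReal.ofReal |t * deriv (fun s => K s x y) t * f y| := by
            simp_rw [Real.enorm_eq_ofReal_abs]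
        _ ≤ ∫⁻ y in S, ENNReal.ofReal (E t) *
              ENNReal.ofReal (dist x y ^ (-((n:ℝ)+γ+1)) * |f y|) := by
            apply setLIntegral_mono' hSmeas
            intro y hy
            rw [← ENNReal.ofReal_mul (hE0 t ht)]
            apply ENNReal.ofReal_le_ofReal
            have hdd : rx < dist x y := hy
            have hd0 : 0 < dist x y := lt_trans hρx hdd
            rw [abs_mul]
            have h2 := hKb t ht x y
            have h3 := exp_factor hc ht hρx hdd hexp
            have hnn1 : (0:ℝ) ≤ C₀ * t ^ (-(n:ℝ)/2) :=
              mul_nonneg hC₀.le (Real.rpow_nonneg ht.le _)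
            have hnn2 : (0:ℝ) ≤ (1 + Real.sqrt t / rx) ^ (-(γ+2)) :=
              Real.rpow_nonneg (by positivity) _
            calc |t * deriv (fun s => K s x y) t| * |f y|
                ≤ (C₀ * t ^ (-(n:ℝ)/2) * Real.exp (-c * dist x y ^ 2 / t) *
                    (1 + Real.sqrt t / rx) ^ (-(γ+2))) * |f y| :=
                  mul_le_mul_of_nonneg_right h2 (abs_nonneg _)
              _ ≤ (C₀ * t ^ (-(n:ℝ)/2) *
                    (C₁ * (c/(2*t)) ^ (-(((n:ℝ)+γ+1)/2)) *
                      Real.exp (-(c * rx^2) / (2*t)) * dist x y ^ (-((n:ℝ)+γ+1))) *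
                    (1 + Real.sqrt t / rx) ^ (-(γ+2))) * |f y| := by
                  apply mul_le_mul_of_nonneg_right _ (abs_nonneg _)
                  apply mul_le_mul_of_nonneg_right _ hnn2
                  exact mul_le_mul_of_nonneg_left h3 hnn1
              _ = E t * (dist x y ^ (-((n:ℝ)+γ+1)) * |f y|) := by rw [hE]; ring
        _ = ENNReal.ofReal (E t) *
              ∫⁻ y in S, ENNReal.ofReal (dist x y ^ (-((n:ℝ)+γ+1)) * |f y|) :=
            lintegral_const_mul' _ _ ENNReal.ofReal_ne_top
        _ ≤ ENNReal.ofReal (E t) *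
              (ENNReal.ofReal (2^(n+1) * 4^γ * rx ^ (-(γ+1))) *
                volume (ball (0:Rn n) 1) * M) := by
            apply mul_le_mul_right
            exact P_le n (by omega) γ hγ ρ f hρ x
        _ = ENNReal.ofReal (E t * B) := by
            rw [hV, hMm, ← ENNReal.ofReal_mul (by positivity : (0:ℝ) ≤ 2^(n+1) * 4^γ * rx ^ (-(γ+1))),
              ← ENNReal.ofReal_mul (by positivity : (0:ℝ) ≤ 2^(n+1) * 4^γ * rx ^ (-(γ+1)) * v₁),
              ← ENNReal.ofReal_mul (hE0 t ht)]
    rwa [ENNReal.ofReal_le_ofReal_iff (mul_nonneg (hE0 t ht) hB0)] at key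
  -- the Θ profile
  obtain ⟨hΘint, hΘval⟩ := Theta_facts γ c rx hγ hc hρx
  -- pointwise bound on the square function integrand
  have hgle : ∀ t ∈ Ioi (0:ℝ),
      (∫ y in S, t * deriv (fun s => K s x y) t * f y) ^ 2 / t ≤
        B^2 * K₃ * (t ^ γ * (1 + Real.sqrt t / rx) ^ (-(2*γ+4)) *
          Real.exp (-(c*rx^2)/t)) := by
    intro t ht
    have ht0 : (0:ℝ) < t := ht
    have h1 : (∫ y in S, t * deriv (fun s => K s x y) t * f y) ^ 2 ≤ (E t * B)^2 := by
      rw [← sq_abs]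
      exact pow_le_pow_left₀ (abs_nonneg _) (hI t ht0) 2
    have h2 : (∫ y in S, t * deriv (fun s => K s x y) t * f y) ^ 2 / t ≤ (E t * B)^2 / t := by
      gcongr
    refine le_trans h2 ?_
    have h3 : (E t * B)^2 / t = B^2 * ((E t)^2 / t) := by ring
    have h4 : (E t)^2 / t = K₃ * (t ^ γ * (1 + Real.sqrt t / rx) ^ (-(2*γ+4)) *
        Real.exp (-(c*rx^2)/t)) := by
      rw [hE, hK₃]
      exact Esq_eq n hc hρx ht0
    rw [h3, h4]
    exact le_of_eq (by ring)
  have hhint : IntegrableOn (fun t => B^2 * K₃ * (t ^ γ * (1 + Real.sqrt t / rx) ^ (-(2*γ+4)) *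
      Real.exp (-(c*rx^2)/t))) (Ioi (0:ℝ)) volume := hΘint.const_mul _
  have hgnonneg : 0 ≤ᵐ[volume.restrict (Ioi (0:ℝ))]
      fun t => (∫ y in S, t * deriv (fun s => K s x y) t * f y) ^ 2 / t := by
    filter_upwards [ae_restrict_mem measurableSet_Ioi] with t ht
    have ht0 : (0:ℝ) < t := ht
    positivity
  have hgleae : (fun t => (∫ y in S, t * deriv (fun s => K s x y) t * f y) ^ 2 / t)
      ≤ᵐ[volume.restrict (Ioi (0:ℝ))]
      fun t => B^2 * K₃ * (t ^ γ * (1 + Real.sqrt t / rx) ^ (-(2*γ+4)) *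
        Real.exp (-(c*rx^2)/t)) := by
    filter_upwards [ae_restrict_mem measurableSet_Ioi] with t ht
    exact hgle t ht
  have hR : (∫ t in Ioi (0:ℝ), (∫ y in S, t * deriv (fun s => K s x y) t * f y) ^ 2 / t) ≤
      ∫ t in Ioi (0:ℝ), B^2 * K₃ * (t ^ γ * (1 + Real.sqrt t / rx) ^ (-(2*γ+4)) *
        Real.exp (-(c*rx^2)/t)) :=
    integral_mono_of_nonneg hgnonneg hhint hgleae
  have hhval : (∫ t in Ioi (0:ℝ), B^2 * K₃ * (t ^ γ * (1 + Real.sqrt t / rx) ^ (-(2*γ+4)) *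
      Real.exp (-(c*rx^2)/t))) = B^2 * K₃ * (rx ^ (2*γ+2) * W₀) := by
    rw [MeasureTheory.integral_const_mul, hΘval]
  -- cancellation of the ρ-powers
  have hcancel : (rx ^ (-(γ+1)))^2 * rx ^ (2*γ+2) = 1 := by
    rw [sq, ← Real.rpow_add hρx, ← Real.rpow_add hρx]
    rw [show -(γ+1) + -(γ+1) + (2*γ+2) = 0 by ring, Real.rpow_zero]
  have hfinal : B^2 * K₃ * (rx ^ (2*γ+2) * W₀) ≤ (C * m)^2 := by
    have hexp1 : B^2 * K₃ * (rx ^ (2*γ+2) * W₀) = X * m^2 := by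
      calc B^2 * K₃ * (rx ^ (2*γ+2) * W₀)
          = ((2^(n+1) * 4^γ:ℝ)^2 * v₁^2 * K₃ * W₀ * m^2) *
              ((rx ^ (-(γ+1)))^2 * rx ^ (2*γ+2)) := by rw [hB]; ring
        _ = X * m^2 := by rw [hcancel, hX]; ring
    rw [hexp1]
    have hX_le : X ≤ C^2 := by
      rw [hCdef]
      nlinarith [Real.sq_sqrt hX0, Real.sqrt_nonneg X]
    nlinarith [sq_nonneg m, hX0]
  have hRfin : (∫ t in Ioi (0:ℝ), (∫ y in S, t * deriv (fun s => K s x y) t * f y) ^ 2 / t)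
      ≤ (C * m)^2 := le_trans hR (by rw [hhval]; exact hfinal)
  have hRnonneg : 0 ≤ ∫ t in Ioi (0:ℝ),
      (∫ y in S, t * deriv (fun s => K s x y) t * f y) ^ 2 / t :=
    integral_nonneg_of_ae hgnonneg
  calc ENNReal.ofReal ((∫ t in Ioi (0:ℝ),
        (∫ y in S, t * deriv (fun s => K s x y) t * f y) ^ 2 / t) ^ ((1:ℝ)/2))
      ≤ ENNReal.ofReal (C * m) := by
        apply ENNReal.ofReal_le_ofReal
        rw [← Real.sqrt_eq_rpow]
        calc Real.sqrt (∫ t in Ioi (0:ℝ),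
              (∫ y in S, t * deriv (fun s => K s x y) t * f y) ^ 2 / t)
            ≤ Real.sqrt ((C * m)^2) := Real.sqrt_le_sqrt hRfin
          _ = C * m := by rw [Real.sqrt_sq (by positivity)]
    _ = ENNReal.ofReal C * ENNReal.ofReal m := ENNReal.ofReal_mul hCpos.le
    _ = ENNReal.ofReal C * M := by rw [← hMm]
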